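/- For every r ∈ [0, r₁), every real d ≥ 1 and every z ≥ 0, the following inequality holds: (σ e²/4)·[ ℓ'(H(r)/(2H(r₁)))·(d·h'(r) − z) + ℓ''(H(r)/(2H(r₁)))·h(r)²/(2H(r₁)) ] ≥ −σ·( d·√(θ²+k) + z + 5/(2H(r₁)) ). -/

import Mathlib

/-- The modifier function `ℓ` from the paper:
`ℓ(r) = e^{-2} - e^{-2/(1-2r)}` for `r < 1/2` and `ℓ(r) = e^{-2}` for `r ≥ 1/2`. -/
noncomputable def ell : ℝ → ℝ := fun r =>
  if r < 1/2 then Real.exp (-2) - Real.exp (-2 / (1 - 2*r)) else Real.exp (-2)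

/-- The comparison function `h(t) = cos(√k t) - (θ/√k) sin(√k t)` (case `k > 0`). -/
noncomputable def hfun (k θ : ℝ) (t : ℝ) : ℝ :=
  Real.cos (Real.sqrt k * t) - (θ / Real.sqrt k) * Real.sin (Real.sqrt k * t)

/-- The first zero `t₀ = (1/√k) arcsin(√(k/(k+θ²)))` of `h`. -/
noncomputable def t0 (k θ : ℝ) : ℝ :=
  (1 / Real.sqrt k) * Real.arcsin (Real.sqrt (k / (k + θ^2)))

/-- `H(r) = (√(k+θ²)/k) cos(arcsin(√(k/(k+θ²))) - √k · min(r, r₁)) - θ/k`. -/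
noncomputable def Hfun (k θ r₁ : ℝ) (r : ℝ) : ℝ :=
  (Real.sqrt (k + θ^2) / k) *
    Real.cos (Real.arcsin (Real.sqrt (k / (k + θ^2))) - Real.sqrt k * min r r₁) - θ / k

/-!
With `s = (1 - 2x)⁻¹ ≥ 1` for `x ∈ [0, 1/2)`, one has `e² ℓ'(x) = 4 s² e^{2-2s} ∈ [0, 4]` and
`e² ℓ''(x) = -16 (s⁴ - s³) e^{2-2s} ∈ [-20, 0]`. Writing `α = arcsin √(k/(k+θ²)) = √k t₀`, the
angle-subtraction formula gives `√k h(r) = √(k+θ²) sin(α - √k r)` and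
`k H(r) = √(k+θ²) (cos(α - √k min(r, r₁)) - cos α)`. Hence on `[0, r₁]` the function `H` increases
strictly from `H(0) = 0`, so `H(r)/(2H(r₁)) ∈ [0, 1/2)`, while `0 ≤ h ≤ 1` and `|h'| ≤ √(θ²+k)`.
The `ℓ'` term is then at least `-(d √(θ²+k) + z)` and the `ℓ''` term at least `-5/(2H(r₁))`.
-/

open Real Set Filter Topology

section Modifier

lemma hasDerivAt_inv_one_sub_two_mul {x : ℝ} (hx : x ≠ 1 / 2) :
    HasDerivAt (fun y : ℝ => (1 - 2 * y)⁻¹) (2 * ((1 - 2 * x)⁻¹) ^ 2) x := by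
  have h : 1 - 2 * x ≠ 0 := by contrapose! hx; linarith
  refine (((hasDerivAt_id' x).const_mul 2).const_sub 1).inv h |>.congr_deriv ?_
  rw [inv_pow]
  ring

lemma ell_eventuallyEq {x : ℝ} (hx : x < 1 / 2) :
    ell =ᶠ[𝓝 x] fun y => exp (-2) - exp (-2 * (1 - 2 * y)⁻¹) := by
  filter_upwards [Iio_mem_nhds hx] with y hy
  rw [ell, if_pos (mem_Iio.1 hy), div_eq_mul_inv]

lemma hasDerivAt_ell {x : ℝ} (hx : x < 1 / 2) :
    HasDerivAt ell (4 * ((1 - 2 * x)⁻¹) ^ 2 * exp (-2 * (1 - 2 * x)⁻¹)) x := by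
  refine HasDerivAt.congr_of_eventuallyEq ?_ (ell_eventuallyEq hx)
  convert ((hasDerivAt_inv_one_sub_two_mul hx.ne).const_mul (-2)).exp.const_sub (exp (-2))
    using 1
  ring

lemma hasDerivAt_deriv_ell {x : ℝ} (hx : x < 1 / 2) :
    HasDerivAt (deriv ell)
      (16 * (((1 - 2 * x)⁻¹) ^ 3 - ((1 - 2 * x)⁻¹) ^ 4) * exp (-2 * (1 - 2 * x)⁻¹)) x := by
  have hderiv : deriv ell =ᶠ[𝓝 x]
      fun y => 4 * ((1 - 2 * y)⁻¹) ^ 2 * exp (-2 * (1 - 2 * y)⁻¹) := by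
    filter_upwards [Iio_mem_nhds hx] with y hy
    exact (hasDerivAt_ell hy).deriv
  refine HasDerivAt.congr_of_eventuallyEq ?_ hderiv
  have hs := hasDerivAt_inv_one_sub_two_mul hx.ne
  refine (((hs.pow 2).const_mul 4).mul (hs.const_mul (-2)).exp).congr_deriv ?_
  simp only [Pi.pow_apply, Nat.cast_ofNat]
  ring

lemma sq_mul_exp_two_sub_two_mul_le_one {s : ℝ} (hs : 0 ≤ s) :
    s ^ 2 * exp (2 - 2 * s) ≤ 1 := by
  have hle : s ≤ exp (s - 1) := by linarith [add_one_le_exp (s - 1)]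
  calc s ^ 2 * exp (2 - 2 * s) ≤ exp (s - 1) ^ 2 * exp (2 - 2 * s) := by gcongr
    _ = 1 := by rw [← exp_nat_mul, ← exp_add]; convert exp_zero using 2; ring

/-- With `t = 2s - 2`, the left side is bounded by `5/4` times the degree-six Taylor
polynomial of `exp t`. -/
lemma pow_four_sub_pow_three_mul_exp_two_sub_two_mul_le {s : ℝ} (hs : 1 ≤ s) :
    (s ^ 4 - s ^ 3) * exp (2 - 2 * s) ≤ 5 / 4 := by
  set t := 2 * s - 2 with ht
  have ht0 : 0 ≤ t := by linarith
  have htaylor := sum_le_exp_of_nonneg ht0 7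
  simp only [Finset.sum_range_succ, Finset.sum_range_zero, Nat.factorial] at htaylor
  have hpoly : s ^ 4 - s ^ 3 ≤ 5 / 4 * exp t := by
    nlinarith [sq_nonneg (2 * t ^ 3 + 6 * t ^ 2 - 15 * t - 51), sq_nonneg t]
  have hexp : exp t * exp (2 - 2 * s) = 1 := by rw [← exp_add]; convert exp_zero using 2; ring
  nlinarith [exp_pos (2 - 2 * s)]

lemma exp_two_mul_deriv_ell_mem_Icc {x : ℝ} (hx : x < 1 / 2) :
    exp 2 * deriv ell x ∈ Icc 0 4 := by
  rw [(hasDerivAt_ell hx).deriv]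
  set s := (1 - 2 * x)⁻¹
  have hs : 0 ≤ s := inv_nonneg.2 (by linarith)
  have heq : exp 2 * (4 * s ^ 2 * exp (-2 * s)) = 4 * (s ^ 2 * exp (2 - 2 * s)) := by
    rw [sub_eq_add_neg, exp_add, neg_mul]; ring
  rw [heq]
  exact ⟨by positivity, by linarith [sq_mul_exp_two_sub_two_mul_le_one hs]⟩

lemma exp_two_mul_deriv_deriv_ell_mem_Icc {x : ℝ} (hx0 : 0 ≤ x) (hx : x < 1 / 2) :
    exp 2 * deriv (deriv ell) x ∈ Icc (-20) 0 := by
  rw [(hasDerivAt_deriv_ell hx).deriv]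
  set s := (1 - 2 * x)⁻¹
  have hs : 1 ≤ s := one_le_inv₀ (by linarith) |>.2 (by linarith)
  have heq : exp 2 * (16 * (s ^ 3 - s ^ 4) * exp (-2 * s)) =
      -16 * ((s ^ 4 - s ^ 3) * exp (2 - 2 * s)) := by
    rw [sub_eq_add_neg (2 : ℝ), exp_add, neg_mul]; ring
  have hs4 : 0 ≤ s ^ 4 - s ^ 3 := by
    nlinarith [pow_le_pow_right₀ hs (Nat.le_succ 3)]
  rw [heq]
  exact ⟨by linarith [pow_four_sub_pow_three_mul_exp_two_sub_two_mul_le hs],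
    by nlinarith [exp_pos (2 - 2 * s)]⟩

end Modifier

section Comparison

variable {k θ r₁ : ℝ}

noncomputable def phase (k θ : ℝ) : ℝ := arcsin (√(k / (k + θ ^ 2)))

lemma phase_nonneg : 0 ≤ phase k θ := arcsin_nonneg.2 (sqrt_nonneg _)

lemma phase_le_pi_div_two : phase k θ ≤ π / 2 := arcsin_le_pi_div_two _

lemma sin_phase (hk : 0 ≤ k) : sin (phase k θ) = √k / √(k + θ ^ 2) := by
  have hle : k / (k + θ ^ 2) ≤ 1 := div_le_one_of_le₀ (by nlinarith) (by positivity)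
  rw [phase, sin_arcsin (by linarith [sqrt_nonneg (k / (k + θ ^ 2))])
    (sqrt_le_one.2 hle), sqrt_div hk]

lemma cos_phase (hk : 0 < k) (hθ : 0 ≤ θ) : cos (phase k θ) = θ / √(k + θ ^ 2) := by
  have hsub : 1 - k / (k + θ ^ 2) = θ ^ 2 / (k + θ ^ 2) := by field_simp; ring
  rw [phase, cos_arcsin, sq_sqrt (by positivity), hsub, sqrt_div (sq_nonneg θ), sqrt_sq hθ]

lemma sqrt_mul_t0 (hk : 0 < k) : √k * t0 k θ = phase k θ := by
  rw [t0, phase]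
  field_simp [(sqrt_pos.2 hk).ne']

lemma sqrt_mul_hfun (hk : 0 < k) (hθ : 0 ≤ θ) (r : ℝ) :
    √k * hfun k θ r = √(k + θ ^ 2) * sin (phase k θ - √k * r) := by
  rw [sin_sub, sin_phase hk.le, cos_phase hk hθ, hfun]
  field_simp [(sqrt_pos.2 hk).ne']

lemma mul_Hfun (hk : 0 < k) (hθ : 0 ≤ θ) (r₁ r : ℝ) :
    k * Hfun k θ r₁ r =
      √(k + θ ^ 2) * (cos (phase k θ - √k * min r r₁) - cos (phase k θ)) := by
  rw [cos_phase hk hθ, Hfun, ← phase]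
  field_simp

lemma Hfun_zero (hk : 0 < k) (hθ : 0 ≤ θ) (hr₁ : 0 ≤ r₁) : Hfun k θ r₁ 0 = 0 := by
  have h := mul_Hfun hk hθ r₁ 0
  rw [min_eq_left hr₁, mul_zero, sub_zero, sub_self, mul_zero] at h
  exact (mul_eq_zero.1 h).resolve_left hk.ne'

lemma strictMonoOn_Hfun (hk : 0 < k) (hθ : 0 ≤ θ) (hr₁' : r₁ ≤ t0 k θ) :
    StrictMonoOn (Hfun k θ r₁) (Icc 0 r₁) := by
  have hr₁α : √k * r₁ ≤ phase k θ := sqrt_mul_t0 (θ := θ) hk ▸ by gcongr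
  have hα := phase_le_pi_div_two (k := k) (θ := θ)
  intro a ⟨ha0, har₁⟩ b ⟨hb0, hbr₁⟩ hab
  have hcos : cos (phase k θ - √k * a) < cos (phase k θ - √k * b) := by
    have hkab : √k * a < √k * b := by gcongr
    have hkb : √k * b ≤ √k * r₁ := by gcongr
    have hka : 0 ≤ √k * a := by positivity
    exact strictAntiOn_cos ⟨by linarith, by linarith [pi_pos]⟩
      ⟨by linarith, by linarith [pi_pos]⟩ (by linarith)
  have hmul : k * Hfun k θ r₁ a < k * Hfun k θ r₁ b := by
    rw [mul_Hfun hk hθ, mul_Hfun hk hθ, min_eq_left har₁, min_eq_left hbr₁]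
    gcongr
  exact lt_of_mul_lt_mul_left hmul hk.le

lemma Hfun_mem_Ico (hk : 0 < k) (hθ : 0 ≤ θ) (hr₁' : r₁ ≤ t0 k θ) {r : ℝ} (hr : r ∈ Ico 0 r₁) :
    Hfun k θ r₁ r ∈ Ico 0 (Hfun k θ r₁ r₁) := by
  have hr₁ : 0 ≤ r₁ := hr.1.trans hr.2.le
  have hmono := strictMonoOn_Hfun hk hθ hr₁'
  refine ⟨Hfun_zero hk hθ hr₁ ▸ hmono.monotoneOn ⟨le_rfl, hr₁⟩ ⟨hr.1, hr.2.le⟩ hr.1, ?_⟩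
  exact hmono ⟨hr.1, hr.2.le⟩ ⟨hr₁, le_rfl⟩ hr.2

lemma hfun_mem_Icc (hk : 0 < k) (hθ : 0 ≤ θ) {r : ℝ} (hr : r ∈ Icc 0 (t0 k θ)) :
    hfun k θ r ∈ Icc 0 1 := by
  have hsk : 0 < √k := sqrt_pos.2 hk
  have hK : 0 < √(k + θ ^ 2) := sqrt_pos.2 (by positivity)
  have hrα : √k * r ≤ phase k θ := sqrt_mul_t0 (θ := θ) hk ▸ by gcongr; exact hr.2
  have hr0 : 0 ≤ √k * r := mul_nonneg hsk.le hr.1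
  have hα := phase_le_pi_div_two (k := k) (θ := θ)
  have hsin0 : 0 ≤ sin (phase k θ - √k * r) :=
    sin_nonneg_of_nonneg_of_le_pi (by linarith) (by linarith [pi_pos])
  have hsin1 : sin (phase k θ - √k * r) ≤ sin (phase k θ) :=
    sin_le_sin_of_le_of_le_pi_div_two (by linarith [pi_pos]) hα (by linarith)
  have hid := sqrt_mul_hfun hk hθ r
  rw [sin_phase hk.le] at hsin1
  constructor
  · exact nonneg_of_mul_nonneg_right (hid ▸ mul_nonneg hK.le hsin0) hsk
  · refine le_of_mul_le_mul_left ?_ hsk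
    rw [hid, mul_one]
    calc √(k + θ ^ 2) * sin (phase k θ - √k * r) ≤ √(k + θ ^ 2) * (√k / √(k + θ ^ 2)) := by
          gcongr
      _ = √k := by field_simp

lemma hasDerivAt_hfun (hk : 0 < k) (r : ℝ) :
    HasDerivAt (hfun k θ) (-(√k * sin (√k * r)) - θ * cos (√k * r)) r := by
  have hlin : HasDerivAt (fun t => √k * t) √k r := by
    simpa using (hasDerivAt_id r).const_mul √k
  refine (hlin.cos.sub (hlin.sin.const_mul (θ / √k))).congr_deriv ?_
  field_simp [(sqrt_pos.2 hk).ne']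

lemma abs_deriv_hfun_le (hk : 0 < k) (r : ℝ) : |deriv (hfun k θ) r| ≤ √(θ ^ 2 + k) := by
  rw [(hasDerivAt_hfun hk r).deriv]
  apply abs_le_sqrt
  have h1 := sin_sq_add_cos_sq (√k * r)
  have hk2 : √k ^ 2 = k := sq_sqrt hk.le
  nlinarith [sq_nonneg (θ * sin (√k * r) - √k * cos (√k * r))]

end Comparison

lemma key_lower_bound_of_bounds {E A B u D Q d z σ c : ℝ} (hA : E * A ∈ Icc 0 4)
    (hB : E * B ∈ Icc (-20) 0) (hu : u ∈ Icc 0 1) (hD : -Q ≤ D) (hQ : 0 ≤ Q) (hd : 1 ≤ d)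
    (hz : 0 ≤ z) (hσ : 0 ≤ σ) (hc : 0 < c) :
    σ * E / 4 * (A * (d * D - z) + B * u ^ 2 / c) ≥ -σ * (d * Q + z + 5 / c) := by
  obtain ⟨hA0, hA4⟩ := hA
  have hw : -(d * Q + z) ≤ d * D - z := by
    nlinarith [mul_le_mul_of_nonneg_left hD (by linarith : (0 : ℝ) ≤ d)]
  have hfirst : -(d * Q + z) ≤ E * A / 4 * (d * D - z) :=
    calc -(d * Q + z) ≤ E * A / 4 * -(d * Q + z) := by
          nlinarith [mul_nonneg (by linarith : 0 ≤ 4 - E * A) (by positivity : 0 ≤ d * Q + z)]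
      _ ≤ _ := mul_le_mul_of_nonneg_left hw (by linarith)
  have hsecond : -(5 / c) ≤ E * B * u ^ 2 / 4 / c := by
    have hnum : -20 ≤ E * B * u ^ 2 := by
      nlinarith [hB.1, hB.2, pow_le_one₀ (n := 2) hu.1 hu.2, sq_nonneg u]
    calc -(5 / c) = -20 / 4 / c := by ring
      _ ≤ _ := by gcongr
  calc -σ * (d * Q + z + 5 / c) = σ * (-(d * Q + z) + -(5 / c)) := by ring
    _ ≤ σ * (E * A / 4 * (d * D - z) + E * B * u ^ 2 / 4 / c) := by gcongr
    _ = _ := by ring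

theorem key_lower_bound_general (k θ r₁ σ : ℝ) (hk : 0 < k) (hθ : 0 ≤ θ)
    (hr₁' : r₁ ≤ t0 k θ) (hσ : 0 ≤ σ) :
    ∀ r ∈ Set.Ico (0:ℝ) r₁, ∀ d : ℝ, 1 ≤ d → ∀ z : ℝ, 0 ≤ z →
      (σ * Real.exp 2 / 4) *
        (deriv ell (Hfun k θ r₁ r / (2 * Hfun k θ r₁ r₁))
            * (d * deriv (hfun k θ) r - z)
          + deriv (deriv ell) (Hfun k θ r₁ r / (2 * Hfun k θ r₁ r₁))
            * (hfun k θ r)^2 / (2 * Hfun k θ r₁ r₁))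
      ≥ -σ * (d * Real.sqrt (θ^2 + k) + z + 5 / (2 * Hfun k θ r₁ r₁)) := by
  intro r hr d hd z hz
  obtain ⟨hH, hHr₁⟩ := Hfun_mem_Ico hk hθ hr₁' hr
  have hH₁ : 0 < Hfun k θ r₁ r₁ := hH.trans_lt hHr₁
  have hx0 : 0 ≤ Hfun k θ r₁ r / (2 * Hfun k θ r₁ r₁) := by positivity
  have hx : Hfun k θ r₁ r / (2 * Hfun k θ r₁ r₁) < 1 / 2 := by
    rw [div_lt_iff₀ (by positivity)]; linarith
  exact key_lower_bound_of_bounds (exp_two_mul_deriv_ell_mem_Icc hx)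
    (exp_two_mul_deriv_deriv_ell_mem_Icc hx0 hx) (hfun_mem_Icc hk hθ ⟨hr.1, hr.2.le.trans hr₁'⟩)
    (abs_le.1 (abs_deriv_hfun_le hk r)).1 (sqrt_nonneg _) hd hz hσ (by linarith)

/-- For every `r ∈ [0, r₁)`, `d ≥ 1` and `z ≥ 0`:
`(σe²/4)[ℓ'(H(r)/(2H(r₁)))(d h'(r) − z) + ℓ''(H(r)/(2H(r₁))) h(r)²/(2H(r₁))]
  ≥ −σ (d √(θ²+k) + z + 5/(2H(r₁)))`. -/
theorem key_lower_bound (k θ r₁ σ : ℝ) (hk : 0 < k) (hθ : 0 ≤ θ)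
    (hr₁ : 0 < r₁) (hr₁' : r₁ ≤ t0 k θ) (hσ : 0 ≤ σ) :
    ∀ r ∈ Set.Ico (0:ℝ) r₁, ∀ d : ℝ, 1 ≤ d → ∀ z : ℝ, 0 ≤ z →
      (σ * Real.exp 2 / 4) *
        (deriv ell (Hfun k θ r₁ r / (2 * Hfun k θ r₁ r₁))
            * (d * deriv (hfun k θ) r - z)
          + deriv (deriv ell) (Hfun k θ r₁ r / (2 * Hfun k θ r₁ r₁))
            * (hfun k θ r)^2 / (2 * Hfun k θ r₁ r₁))
      ≥ -σ * (d * Real.sqrt (θ^2 + k) + z + 5 / (2 * Hfun k θ r₁ r₁)) :=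
  key_lower_bound_general k θ r₁ σ hk hθ hr₁' hσ
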